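/- Let μ ∈ (ℤ_{≥0})^n be a composition and 1 ≤ i ≤ n−1. Then the eigenvalue vector of s_i(μ) equals the vector obtained from μ̄ by swapping its i-th and (i+1)-st entries (that is, (s_i μ)‾ = s_i(μ̄)) if and only if μ_i ≠ μ_{i+1}. -/
import Mathlib


noncomputable section
set_option synthInstance.maxHeartbeats 1000000
set_option maxHeartbeats 1000000

open MvPolynomial

/-- `K = ℚ(q,t)`, the field of rational functions in two indeterminates over `ℚ`. -/
abbrev Kq : Type := FractionRing (MvPolynomial (Fin 2) ℚ)

/-- The indeterminate `q`. -/
def qv : Kq := algebraMap (MvPolynomial (Fin 2) ℚ) Kq (X 0)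

/-- The indeterminate `t`. -/
def tv : Kq := algebraMap (MvPolynomial (Fin 2) ℚ) Kq (X 1)

/-- `ℓ′_ν(i) = #{j < i : ν_j ≥ ν_i} + #{j > i : ν_j > ν_i}`. -/
def lprime (n : ℕ) (ν : Fin n → ℕ) (i : Fin n) : ℕ :=
  (Finset.univ.filter fun j : Fin n => j < i ∧ ν i ≤ ν j).card +
  (Finset.univ.filter fun j : Fin n => i < j ∧ ν i < ν j).card

/-- The eigenvalue `ν̄_i = q^{ν_i} t^{−ℓ′_ν(i)}`. -/
def eig (n : ℕ) (ν : Fin n → ℕ) (i : Fin n) : Kq :=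
  qv ^ (ν i) * tv ^ (-(lprime n ν i : ℤ))

lemma lprime_eq_sum (n : ℕ) (ν : Fin n → ℕ) (j : Fin n) :
    lprime n ν j = (∑ k : Fin n, if k < j ∧ ν j ≤ ν k then 1 else 0)
      + (∑ k : Fin n, if j < k ∧ ν j < ν k then 1 else 0) := by
  unfold lprime
  rw [Finset.card_filter, Finset.card_filter]

section Key
variable {n : ℕ} (μ : Fin n → ℕ) (a b : Fin n)

lemma keyA (hab : (a:ℕ)+1 = (b:ℕ)) :
    lprime n (μ ∘ Equiv.swap a b) a + (if μ b ≤ μ a then 1 else 0)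
      = lprime n μ b + (if μ b < μ a then 1 else 0) := by
  have hne : a ≠ b := fun h => by rw [h] at hab; omega
  have hσa : Equiv.swap a b a = b := Equiv.swap_apply_left a b
  have hσb : Equiv.swap a b b = a := Equiv.swap_apply_right a b
  have hlt : a < b := by rw [Fin.lt_def]; omega
  have hnlt : ¬ (b < a) := by rw [Fin.lt_def]; omega
  have hirr : ¬ (a < a) := lt_irrefl a
  have hirrb : ¬ (b < b) := lt_irrefl b
  rw [lprime_eq_sum, lprime_eq_sum]
  have E1 : (∑ k : Fin n, if k < a ∧ (μ ∘ Equiv.swap a b) a ≤ (μ ∘ Equiv.swap a b) k then 1 else 0)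
      = ∑ k : Fin n, if k < a ∧ μ b ≤ μ k then (1:ℕ) else 0 := by
    refine Finset.sum_congr rfl fun k _ => ?_
    by_cases hka : k = a
    · simp [hka, hirr]
    · by_cases hkb : k = b
      · simp [hkb, hnlt]
      · simp [Function.comp, hσa, Equiv.swap_apply_of_ne_of_ne hka hkb]
  have E2 : (∑ k : Fin n, if a < k ∧ (μ ∘ Equiv.swap a b) a < (μ ∘ Equiv.swap a b) k then 1 else 0)
      = (if μ b < μ a then 1 else 0) + ∑ k : Fin n, if b < k ∧ μ b < μ k then (1:ℕ) else 0 := by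
    have hpt : ∀ k : Fin n, (if a < k ∧ (μ ∘ Equiv.swap a b) a < (μ ∘ Equiv.swap a b) k then (1:ℕ) else 0)
        = (if k = b then (if μ b < μ a then (1:ℕ) else 0) else 0)
          + (if b < k ∧ μ b < μ k then 1 else 0) := by
      intro k
      by_cases hka : k = a
      · simp [hka, hirr, hne, hnlt]
      · by_cases hkb : k = b
        · simp [hkb, Function.comp, hσa, hσb, hlt, hirrb]
        · have hka' : (k:ℕ) ≠ (a:ℕ) := fun h => hka (Fin.ext h)
          have hkb' : (k:ℕ) ≠ (b:ℕ) := fun h => hkb (Fin.ext h)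
          have hiff : a < k ↔ b < k := by rw [Fin.lt_def, Fin.lt_def]; omega
          simp only [Function.comp_apply, hσa, Equiv.swap_apply_of_ne_of_ne hka hkb,
            if_neg hkb, zero_add, hiff]
    rw [Finset.sum_congr rfl fun k _ => hpt k, Finset.sum_add_distrib]
    simp [Finset.sum_ite_eq']
  have E3 : (∑ k : Fin n, if k < b ∧ μ b ≤ μ k then (1:ℕ) else 0)
      = (if μ b ≤ μ a then 1 else 0) + ∑ k : Fin n, if k < a ∧ μ b ≤ μ k then (1:ℕ) else 0 := by
    have hpt : ∀ k : Fin n, (if k < b ∧ μ b ≤ μ k then (1:ℕ) else 0)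
        = (if k = a then (if μ b ≤ μ a then (1:ℕ) else 0) else 0)
          + (if k < a ∧ μ b ≤ μ k then 1 else 0) := by
      intro k
      by_cases hka : k = a
      · simp [hka, hlt, hirr]
      · by_cases hkb : k = b
        · simp [hkb, hne.symm, hirrb, hnlt]
        · have hka' : (k:ℕ) ≠ (a:ℕ) := fun h => hka (Fin.ext h)
          have hkb' : (k:ℕ) ≠ (b:ℕ) := fun h => hkb (Fin.ext h)
          have hiff : k < b ↔ k < a := by rw [Fin.lt_def, Fin.lt_def]; omega
          simp only [if_neg hka, zero_add, hiff]
    rw [Finset.sum_congr rfl fun k _ => hpt k, Finset.sum_add_distrib]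
    simp [Finset.sum_ite_eq']
  rw [E1, E2, E3]
  omega

lemma keyB (hab : (a:ℕ)+1 = (b:ℕ)) :
    lprime n (μ ∘ Equiv.swap a b) b + (if μ a < μ b then 1 else 0)
      = lprime n μ a + (if μ a ≤ μ b then 1 else 0) := by
  have hne : a ≠ b := fun h => by rw [h] at hab; omega
  have hσa : Equiv.swap a b a = b := Equiv.swap_apply_left a b
  have hσb : Equiv.swap a b b = a := Equiv.swap_apply_right a b
  have hlt : a < b := by rw [Fin.lt_def]; omega
  have hnlt : ¬ (b < a) := by rw [Fin.lt_def]; omega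
  have hirr : ¬ (a < a) := lt_irrefl a
  have hirrb : ¬ (b < b) := lt_irrefl b
  rw [lprime_eq_sum, lprime_eq_sum]
  have E1 : (∑ k : Fin n, if k < b ∧ (μ ∘ Equiv.swap a b) b ≤ (μ ∘ Equiv.swap a b) k then 1 else 0)
      = (if μ a ≤ μ b then 1 else 0) + ∑ k : Fin n, if k < a ∧ μ a ≤ μ k then (1:ℕ) else 0 := by
    have hpt : ∀ k : Fin n, (if k < b ∧ (μ ∘ Equiv.swap a b) b ≤ (μ ∘ Equiv.swap a b) k then (1:ℕ) else 0)
        = (if k = a then (if μ a ≤ μ b then (1:ℕ) else 0) else 0)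
          + (if k < a ∧ μ a ≤ μ k then 1 else 0) := by
      intro k
      by_cases hka : k = a
      · simp [hka, Function.comp, hσa, hσb, hlt, hirr, hne]
      · by_cases hkb : k = b
        · simp [hkb, hne.symm, hirrb, hnlt]
        · have hka' : (k:ℕ) ≠ (a:ℕ) := fun h => hka (Fin.ext h)
          have hkb' : (k:ℕ) ≠ (b:ℕ) := fun h => hkb (Fin.ext h)
          have hiff : k < b ↔ k < a := by rw [Fin.lt_def, Fin.lt_def]; omega
          simp only [Function.comp_apply, hσb, Equiv.swap_apply_of_ne_of_ne hka hkb,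
            if_neg hka, zero_add, hiff]
    rw [Finset.sum_congr rfl fun k _ => hpt k, Finset.sum_add_distrib]
    simp [Finset.sum_ite_eq']
  have E2 : (∑ k : Fin n, if b < k ∧ (μ ∘ Equiv.swap a b) b < (μ ∘ Equiv.swap a b) k then 1 else 0)
      = ∑ k : Fin n, if b < k ∧ μ a < μ k then (1:ℕ) else 0 := by
    refine Finset.sum_congr rfl fun k _ => ?_
    by_cases hka : k = a
    · simp [hka, hnlt]
    · by_cases hkb : k = b
      · simp [hkb, hirrb]
      · simp [Function.comp, hσb, Equiv.swap_apply_of_ne_of_ne hka hkb]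
  have E3 : (∑ k : Fin n, if a < k ∧ μ a < μ k then (1:ℕ) else 0)
      = (if μ a < μ b then 1 else 0) + ∑ k : Fin n, if b < k ∧ μ a < μ k then (1:ℕ) else 0 := by
    have hpt : ∀ k : Fin n, (if a < k ∧ μ a < μ k then (1:ℕ) else 0)
        = (if k = b then (if μ a < μ b then (1:ℕ) else 0) else 0)
          + (if b < k ∧ μ a < μ k then 1 else 0) := by
      intro k
      by_cases hka : k = a
      · simp [hka, hirr, hne, hnlt]
      · by_cases hkb : k = b
        · simp [hkb, hlt, hirrb]
        · have hka' : (k:ℕ) ≠ (a:ℕ) := fun h => hka (Fin.ext h)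
          have hkb' : (k:ℕ) ≠ (b:ℕ) := fun h => hkb (Fin.ext h)
          have hiff : a < k ↔ b < k := by rw [Fin.lt_def, Fin.lt_def]; omega
          simp only [if_neg hkb, zero_add, hiff]
    rw [Finset.sum_congr rfl fun k _ => hpt k, Finset.sum_add_distrib]
    simp [Finset.sum_ite_eq']
  rw [E1, E2, E3]
  omega

lemma keyO (hab : (a:ℕ)+1 = (b:ℕ)) (j : Fin n)
    (hja : j ≠ a) (hjb : j ≠ b) :
    lprime n (μ ∘ Equiv.swap a b) j = lprime n μ j := by
  have hσj : Equiv.swap a b j = j := Equiv.swap_apply_of_ne_of_ne hja hjb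
  have hja' : (j:ℕ) ≠ (a:ℕ) := fun h => hja (Fin.ext h)
  have hjb' : (j:ℕ) ≠ (b:ℕ) := fun h => hjb (Fin.ext h)
  have hstep : ∀ m : Fin n, ((Equiv.swap a b m : Fin n) < j ↔ m < j)
      ∧ (j < Equiv.swap a b m ↔ j < m) := by
    intro m
    by_cases hma : m = a
    · rw [hma, Equiv.swap_apply_left]
      constructor <;> (rw [Fin.lt_def, Fin.lt_def]; omega)
    · by_cases hmb : m = b
      · rw [hmb, Equiv.swap_apply_right]
        constructor <;> (rw [Fin.lt_def, Fin.lt_def]; omega)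
      · rw [Equiv.swap_apply_of_ne_of_ne hma hmb]
        exact ⟨Iff.rfl, Iff.rfl⟩
  rw [lprime_eq_sum, lprime_eq_sum]
  have E1 : (∑ k : Fin n, if k < j ∧ (μ ∘ Equiv.swap a b) j ≤ (μ ∘ Equiv.swap a b) k then 1 else 0)
      = ∑ k : Fin n, if k < j ∧ μ j ≤ μ k then (1:ℕ) else 0 := by
    calc (∑ k : Fin n, if k < j ∧ (μ ∘ Equiv.swap a b) j ≤ (μ ∘ Equiv.swap a b) k then (1:ℕ) else 0)
        = ∑ k : Fin n, (fun m => if (Equiv.swap a b m : Fin n) < j ∧ μ j ≤ μ m then (1:ℕ) else 0) (Equiv.swap a b k) := by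
          refine Finset.sum_congr rfl fun k _ => ?_
          simp only [Function.comp_apply, hσj, Equiv.swap_apply_self]
      _ = ∑ m : Fin n, if (Equiv.swap a b m : Fin n) < j ∧ μ j ≤ μ m then (1:ℕ) else 0 := by
          exact Equiv.sum_comp (Equiv.swap a b) (fun m => if (Equiv.swap a b m : Fin n) < j ∧ μ j ≤ μ m then (1:ℕ) else 0)
      _ = ∑ k : Fin n, if k < j ∧ μ j ≤ μ k then (1:ℕ) else 0 := by
          refine Finset.sum_congr rfl fun m _ => ?_
          simp only [(hstep m).1]
  have E2 : (∑ k : Fin n, if j < k ∧ (μ ∘ Equiv.swap a b) j < (μ ∘ Equiv.swap a b) k then 1 else 0)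
      = ∑ k : Fin n, if j < k ∧ μ j < μ k then (1:ℕ) else 0 := by
    calc (∑ k : Fin n, if j < k ∧ (μ ∘ Equiv.swap a b) j < (μ ∘ Equiv.swap a b) k then (1:ℕ) else 0)
        = ∑ k : Fin n, (fun m => if j < (Equiv.swap a b m : Fin n) ∧ μ j < μ m then (1:ℕ) else 0) (Equiv.swap a b k) := by
          refine Finset.sum_congr rfl fun k _ => ?_
          simp only [Function.comp_apply, hσj, Equiv.swap_apply_self]
      _ = ∑ m : Fin n, if j < (Equiv.swap a b m : Fin n) ∧ μ j < μ m then (1:ℕ) else 0 := by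
          exact Equiv.sum_comp (Equiv.swap a b) (fun m => if j < (Equiv.swap a b m : Fin n) ∧ μ j < μ m then (1:ℕ) else 0)
      _ = ∑ k : Fin n, if j < k ∧ μ j < μ k then (1:ℕ) else 0 := by
          refine Finset.sum_congr rfl fun m _ => ?_
          simp only [(hstep m).2]
  rw [E1, E2]

end Key

lemma qv_ne_zero : qv ≠ 0 := by
  intro h
  have hinj := IsFractionRing.injective (MvPolynomial (Fin 2) ℚ) Kq
  have : (X 0 : MvPolynomial (Fin 2) ℚ) = 0 := hinj (by rw [map_zero]; exact h)
  exact MvPolynomial.X_ne_zero _ this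

lemma tv_ne_zero : tv ≠ 0 := by
  intro h
  have hinj := IsFractionRing.injective (MvPolynomial (Fin 2) ℚ) Kq
  have : (X 1 : MvPolynomial (Fin 2) ℚ) = 0 := hinj (by rw [map_zero]; exact h)
  exact MvPolynomial.X_ne_zero _ this

lemma tv_ne_one : tv ≠ 1 := by
  intro h
  have hinj := IsFractionRing.injective (MvPolynomial (Fin 2) ℚ) Kq
  have hx : (X 1 : MvPolynomial (Fin 2) ℚ) = 1 := hinj (by rw [map_one]; exact h)
  have := congrArg MvPolynomial.constantCoeff hx
  simp at this

/-- `(s_i μ)‾ = s_i(μ̄)` if and only if `μ_i ≠ μ_{i+1}` (1-indexed `i`). -/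
theorem eig_swap_iff (n : ℕ) (μ : Fin n → ℕ) (i : ℕ) (h1 : 1 ≤ i) (h2 : i < n) :
    (∀ j : Fin n,
        eig n (μ ∘ Equiv.swap ⟨i - 1, by omega⟩ ⟨i, h2⟩) j =
          eig n μ (Equiv.swap ⟨i - 1, by omega⟩ ⟨i, h2⟩ j)) ↔
      μ ⟨i - 1, by omega⟩ ≠ μ ⟨i, h2⟩ := by
  have ha : i - 1 < n := by omega
  set a : Fin n := ⟨i - 1, ha⟩ with hadef
  set b : Fin n := ⟨i, h2⟩ with hbdef
  have hab : (a:ℕ) + 1 = (b:ℕ) := by simp [hadef, hbdef]; omega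
  constructor
  · intro H heq
    have hfix : μ ∘ Equiv.swap a b = μ := by
      funext k
      by_cases hka : k = a
      · simp [hka, Equiv.swap_apply_left, heq.symm]
      · by_cases hkb : k = b
        · simp [hkb, Equiv.swap_apply_right, heq]
        · simp [Equiv.swap_apply_of_ne_of_ne hka hkb]
    have hL := keyA μ a b hab
    rw [hfix] at hL
    simp [heq, lt_irrefl] at hL
    have Ha := H a
    rw [hfix, Equiv.swap_apply_left] at Ha
    unfold eig at Ha
    rw [heq] at Ha
    have hq : qv ^ (μ b) ≠ 0 := pow_ne_zero _ qv_ne_zero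
    have ht := mul_left_cancel₀ hq Ha
    rw [← hL] at ht
    have hcast : (-((lprime n μ a + 1 : ℕ) : ℤ)) = (-(lprime n μ a : ℤ)) + (-1) := by push_cast; ring
    rw [hcast, zpow_add₀ tv_ne_zero, zpow_neg_one] at ht
    have hz : (tv : Kq) ^ (-(lprime n μ a : ℤ)) ≠ 0 := zpow_ne_zero _ tv_ne_zero
    have h1' : (1 : Kq) = tv⁻¹ := mul_left_cancel₀ hz (by rw [mul_one]; exact ht)
    have : tv = 1 := by
      rw [eq_comm, inv_eq_one] at h1'
      exact h1'
    exact tv_ne_one this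
  · intro hne j
    have hlp : lprime n (μ ∘ Equiv.swap a b) j = lprime n μ (Equiv.swap a b j) := by
      by_cases hja : j = a
      · rw [hja, Equiv.swap_apply_left]
        have hA := keyA μ a b hab
        have hAB : (if μ b ≤ μ a then (1:ℕ) else 0) = (if μ b < μ a then (1:ℕ) else 0) := by
          split_ifs <;> omega
        omega
      · by_cases hjb : j = b
        · rw [hjb, Equiv.swap_apply_right]
          have hB := keyB μ a b hab
          have hAB : (if μ a < μ b then (1:ℕ) else 0) = (if μ a ≤ μ b then (1:ℕ) else 0) := by
            split_ifs <;> omega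
          omega
        · rw [Equiv.swap_apply_of_ne_of_ne hja hjb]
          exact keyO μ a b hab j hja hjb
    show eig n (μ ∘ Equiv.swap a b) j = eig n μ (Equiv.swap a b j)
    unfold eig
    rw [hlp]
    rfl
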